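/- Define R(r₁,r₂) = 3(12r₁²r₂² − 12r₁²r₂ + r₁² − 12r₁r₂² + 12r₁r₂ − r₁ + r₂² − r₂) / (r₁ r₂ (1−r₁)(1−r₂)) and the weight w(r₁,r₂) = (r₁(1−r₁) r₂(1−r₂))^{5/2} on (0,1)². Then ∫₀¹∫₀¹ R·w dr₁ dr₂ / ∫₀¹∫₀¹ w dr₁ dr₂ = 36/5. Moreover, there is no integer k such that 36/5 = k/2; hence the volume-averaged Ricci scalar of the double-collider bitnet is not a half-integer. -/

import Mathlib

/-!
On the open unit square the Ricci scalar simplifies to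
`R = 36 - 3 / (r₁ (1 - r₁)) - 3 / (r₂ (1 - r₂))`, and the weight is the product of
`(rᵢ (1 - rᵢ)) ^ (5/2)`. Both integrals therefore factor into one-dimensional Beta integrals,
`∫ R w = 36 B(7/2,7/2)² - 6 B(5/2,5/2) B(7/2,7/2)` and `∫ w = B(7/2,7/2)²`, and
`B(7/2,7/2) = (5/24) B(5/2,5/2)` by `Γ(s+1) = s Γ(s)`, so the average is `36 - 6 · 24/5 = 36/5`.
-/

open MeasureTheory Set ProbabilityTheory

theorem integral_Ioo_rpow_mul_one_sub_rpow {a b : ℝ} (ha : 0 < a) (hb : 0 < b) :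
    ∫ x in Ioo (0 : ℝ) 1, x ^ (a - 1) * (1 - x) ^ (b - 1) = beta a b := by
  apply Complex.ofReal_injective
  have hB : Complex.betaIntegral a b =
      ∫ x in Ioo (0 : ℝ) 1, ((x ^ (a - 1) * (1 - x) ^ (b - 1) : ℝ) : ℂ) := by
    rw [Complex.betaIntegral, intervalIntegral.integral_of_le zero_le_one,
      integral_Ioc_eq_integral_Ioo]
    refine setIntegral_congr_fun measurableSet_Ioo fun x hx => ?_
    push_cast [Complex.ofReal_cpow hx.1.le, Complex.ofReal_cpow (sub_nonneg.2 hx.2.le)]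
    rfl
  rw [← integral_complex_ofReal, ← hB,
    Complex.betaIntegral_eq_Gamma_mul_div _ _ (by simpa) (by simpa), beta]
  push_cast [← Complex.Gamma_ofReal]
  rfl

theorem integral_Ioo_mul_one_sub_rpow {s : ℝ} (hs : -1 < s) :
    ∫ x in Ioo (0 : ℝ) 1, (x * (1 - x)) ^ s = beta (s + 1) (s + 1) := by
  rw [← integral_Ioo_rpow_mul_one_sub_rpow (by linarith) (by linarith), add_sub_cancel_right]
  exact setIntegral_congr_fun measurableSet_Ioo fun x hx =>
    Real.mul_rpow hx.1.le (by linarith [hx.2])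

theorem integrableOn_Ioo_mul_one_sub_rpow {s : ℝ} (hs : -1 < s) :
    IntegrableOn (fun x : ℝ => (x * (1 - x)) ^ s) (Ioo 0 1) :=
  .of_integral_ne_zero <| by
    rw [integral_Ioo_mul_one_sub_rpow hs]
    exact (beta_pos (by linarith) (by linarith)).ne'

theorem beta_add_one_add_one {a b : ℝ} (ha : 0 < a) (hb : 0 < b) :
    beta (a + 1) (b + 1) = a * b / ((a + b + 1) * (a + b)) * beta a b := by
  have hab : 0 < a + b := add_pos ha hb
  have := (Real.Gamma_pos_of_pos hab).ne'
  rw [beta, beta, show a + 1 + (b + 1) = a + b + 1 + 1 by ring, Real.Gamma_add_one ha.ne',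
    Real.Gamma_add_one hb.ne', Real.Gamma_add_one (by linarith), Real.Gamma_add_one hab.ne']
  field_simp

theorem setIntegral_prod_mul_add_mul_swap {α : Type*} [MeasurableSpace α] {μ : Measure α}
    [SFinite μ] {s : Set α} {f g : α → ℝ} (hf : IntegrableOn f s μ)
    (hg : IntegrableOn g s μ) :
    ∫ z in s ×ˢ s, (f z.1 * g z.2 + g z.1 * f z.2) ∂μ.prod μ =
      2 * ((∫ x in s, f x ∂μ) * ∫ x in s, g x ∂μ) := by
  rw [← Measure.prod_restrict, integral_add (hf.mul_prod hg) (hg.mul_prod hf),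
    integral_prod_mul, integral_prod_mul]
  ring

noncomputable section

def doubleColliderRicci (r₁ r₂ : ℝ) : ℝ :=
  3 * (12 * r₁ ^ 2 * r₂ ^ 2 - 12 * r₁ ^ 2 * r₂ + r₁ ^ 2 - 12 * r₁ * r₂ ^ 2 +
    12 * r₁ * r₂ - r₁ + r₂ ^ 2 - r₂) / (r₁ * r₂ * (1 - r₁) * (1 - r₂))

def doubleColliderWeight (r₁ r₂ : ℝ) : ℝ :=
  (r₁ * (1 - r₁) * (r₂ * (1 - r₂))) ^ ((5 : ℝ) / 2)

end

theorem doubleColliderRicci_eq {x y : ℝ} (hx : x * (1 - x) ≠ 0) (hy : y * (1 - y) ≠ 0) :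
    doubleColliderRicci x y = 36 - 3 / (x * (1 - x)) - 3 / (y * (1 - y)) := by
  obtain ⟨hx₀, hx₁⟩ := mul_ne_zero_iff.mp hx
  obtain ⟨hy₀, hy₁⟩ := mul_ne_zero_iff.mp hy
  rw [doubleColliderRicci]
  field_simp
  ring

theorem doubleColliderRicci_mul_weight {x y : ℝ} (hx : 0 < x * (1 - x)) (hy : 0 < y * (1 - y)) :
    doubleColliderRicci x y * doubleColliderWeight x y =
      (18 * (x * (1 - x)) ^ ((5 : ℝ) / 2) - 3 * (x * (1 - x)) ^ ((3 : ℝ) / 2)) *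
          (y * (1 - y)) ^ ((5 : ℝ) / 2) +
        (x * (1 - x)) ^ ((5 : ℝ) / 2) *
          (18 * (y * (1 - y)) ^ ((5 : ℝ) / 2) - 3 * (y * (1 - y)) ^ ((3 : ℝ) / 2)) := by
  rw [doubleColliderRicci_eq hx.ne' hy.ne', doubleColliderWeight, Real.mul_rpow hx.le hy.le]
  generalize x * (1 - x) = a at hx ⊢
  generalize y * (1 - y) = b at hy ⊢
  have hpow : ∀ t : ℝ, 0 < t → t ^ ((5 : ℝ) / 2) = t ^ ((3 : ℝ) / 2) * t := fun t ht => by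
    rw [← Real.rpow_add_one ht.ne']; norm_num
  rw [hpow _ hx, hpow _ hy]
  field_simp
  ring

theorem integral_doubleColliderWeight :
    ∫ r in Ioo (0 : ℝ) 1 ×ˢ Ioo (0 : ℝ) 1, doubleColliderWeight r.1 r.2 =
      beta (7 / 2) (7 / 2) ^ 2 := by
  set f : ℝ → ℝ := fun x => (x * (1 - x)) ^ ((5 : ℝ) / 2)
  have hpos : ∀ x ∈ Ioo (0 : ℝ) 1, 0 ≤ x * (1 - x) := fun x hx =>
    mul_nonneg hx.1.le (by linarith [hx.2])
  calc ∫ r in Ioo (0 : ℝ) 1 ×ˢ Ioo (0 : ℝ) 1, doubleColliderWeight r.1 r.2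
      = ∫ r in Ioo (0 : ℝ) 1 ×ˢ Ioo (0 : ℝ) 1, f r.1 * f r.2 :=
        setIntegral_congr_fun (measurableSet_Ioo.prod measurableSet_Ioo) fun r hr =>
          Real.mul_rpow (hpos _ hr.1) (hpos _ hr.2)
    _ = beta (7 / 2) (7 / 2) ^ 2 := by
        rw [Measure.volume_eq_prod, setIntegral_prod_mul,
          integral_Ioo_mul_one_sub_rpow (by norm_num)]
        norm_num [sq]

theorem integral_doubleColliderRicci_mul_weight :
    ∫ r in Ioo (0 : ℝ) 1 ×ˢ Ioo (0 : ℝ) 1,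
        doubleColliderRicci r.1 r.2 * doubleColliderWeight r.1 r.2 =
      2 * ((18 * beta (7 / 2) (7 / 2) - 3 * beta (5 / 2) (5 / 2)) * beta (7 / 2) (7 / 2)) := by
  set f : ℝ → ℝ := fun x => (x * (1 - x)) ^ ((5 : ℝ) / 2)
  set g : ℝ → ℝ := fun x => (x * (1 - x)) ^ ((3 : ℝ) / 2)
  set h : ℝ → ℝ := fun x => 18 * f x - 3 * g x
  have hf : IntegrableOn f (Ioo 0 1) := integrableOn_Ioo_mul_one_sub_rpow (by norm_num)
  have hg : IntegrableOn g (Ioo 0 1) := integrableOn_Ioo_mul_one_sub_rpow (by norm_num)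
  have hpos : ∀ x ∈ Ioo (0 : ℝ) 1, 0 < x * (1 - x) := fun x hx =>
    mul_pos hx.1 (by linarith [hx.2])
  calc ∫ r in Ioo (0 : ℝ) 1 ×ˢ Ioo (0 : ℝ) 1,
        doubleColliderRicci r.1 r.2 * doubleColliderWeight r.1 r.2
      = ∫ r in Ioo (0 : ℝ) 1 ×ˢ Ioo (0 : ℝ) 1, (h r.1 * f r.2 + f r.1 * h r.2) :=
        setIntegral_congr_fun (measurableSet_Ioo.prod measurableSet_Ioo) fun r hr =>
          doubleColliderRicci_mul_weight (hpos _ hr.1) (hpos _ hr.2)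
    _ = 2 * ((∫ x in Ioo (0 : ℝ) 1, h x) * ∫ x in Ioo (0 : ℝ) 1, f x) := by
        rw [Measure.volume_eq_prod]
        exact setIntegral_prod_mul_add_mul_swap ((hf.const_mul 18).sub (hg.const_mul 3)) hf
    _ = _ := by
        rw [integral_sub (hf.const_mul 18) (hg.const_mul 3), integral_const_mul,
          integral_const_mul, integral_Ioo_mul_one_sub_rpow (by norm_num),
          integral_Ioo_mul_one_sub_rpow (by norm_num)]
        norm_num

/-- The volume-averaged Ricci scalar of the double-collider bitnet `D₄` equals `36/5`,
which is not a half-integer; this disproves the half-integer quantization conjecture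
for loop bitnets. -/
theorem double_collider_average_ricci :
    let R : ℝ → ℝ → ℝ := fun r₁ r₂ =>
      3 * (12 * r₁ ^ 2 * r₂ ^ 2 - 12 * r₁ ^ 2 * r₂ + r₁ ^ 2 - 12 * r₁ * r₂ ^ 2 +
        12 * r₁ * r₂ - r₁ + r₂ ^ 2 - r₂) / (r₁ * r₂ * (1 - r₁) * (1 - r₂))
    let w : ℝ → ℝ → ℝ := fun r₁ r₂ => (r₁ * (1 - r₁) * (r₂ * (1 - r₂))) ^ ((5 : ℝ) / 2)
    (∫ r in Set.Ioo (0 : ℝ) 1 ×ˢ Set.Ioo (0 : ℝ) 1, R r.1 r.2 * w r.1 r.2) /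
      (∫ r in Set.Ioo (0 : ℝ) 1 ×ˢ Set.Ioo (0 : ℝ) 1, w r.1 r.2) = 36 / 5 ∧
    ¬ ∃ k : ℤ, (36 : ℝ) / 5 = (k : ℝ) / 2 := by
  show (∫ r in Ioo (0 : ℝ) 1 ×ˢ Ioo (0 : ℝ) 1,
      doubleColliderRicci r.1 r.2 * doubleColliderWeight r.1 r.2) /
    (∫ r in Ioo (0 : ℝ) 1 ×ˢ Ioo (0 : ℝ) 1, doubleColliderWeight r.1 r.2) = 36 / 5 ∧ _
  have hbeta : beta (7 / 2) (7 / 2) = 5 / 24 * beta (5 / 2) (5 / 2) := by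
    rw [show (7 / 2 : ℝ) = 5 / 2 + 1 by norm_num,
      beta_add_one_add_one (by norm_num) (by norm_num)]
    norm_num
  have := beta_pos (α := 5 / 2) (β := 5 / 2) (by norm_num) (by norm_num)
  refine ⟨?_, ?_⟩
  · rw [integral_doubleColliderRicci_mul_weight, integral_doubleColliderWeight, hbeta]
    field_simp
    ring
  · rintro ⟨k, hk⟩
    have : 5 * k = 72 := by exact_mod_cast (by linarith : (5 * k : ℝ) = 72)
    omega
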